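/- arXiv:2501.17342 — 2 statements merged into one kernel-verified Lean document; each statement's English description precedes it below -/
import Mathlib

section
/- If C is a class of groups closed under taking subgroups and extensions, X is a residually-C group, and Y is a retract of X, then Y is C-separable in X. -/
/-! If `ρ` retracts `X` onto `Y` and `x ∉ Y`, then `x ≠ ρ x`, so some quotient `σ : X → K` in `C`
separates `x` from `ρ x`. The map `x ↦ (σ x, σ (ρ x))` sends `Y` into the diagonal of `K × K` but `x`
off it, and its image lies in `C` because `K × K` is an extension of `K` by `K`. -/

namespace GroupClass

variable (C : ∀ (G : Type) [Group G], Prop)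

def SubgroupClosed : Prop :=
  ∀ (G : Type) [Group G] (K : Type) [Group K] (f : K →* G), Function.Injective f → C G → C K

def ExtensionClosed : Prop :=
  ∀ (G : Type) [Group G] (N : Subgroup G) (hN : N.Normal),
    C N → @C (G ⧸ N) (@QuotientGroup.Quotient.group G _ N hN) → C G

variable {C}

theorem SubgroupClosed.of_mulEquiv (hsub : SubgroupClosed C) {G K : Type} [Group G] [Group K]
    (e : K ≃* G) (hG : C G) : C K :=
  hsub G K e.toMonoidHom e.injective hG

theorem ExtensionClosed.prod (hext : ExtensionClosed C) (hsub : SubgroupClosed C)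
    {G H : Type} [Group G] [Group H] (hG : C G) (hH : C H) : C (G × H) := by
  refine hext (G × H) (MonoidHom.snd G H).ker inferInstance ?_ ?_
  · have hinj : Function.Injective ((MonoidHom.fst G H).comp (MonoidHom.snd G H).ker.subtype) := by
      rintro ⟨⟨a, b⟩, hb⟩ ⟨⟨c, d⟩, hd⟩ h
      obtain rfl : b = 1 := hb
      obtain rfl : d = 1 := hd
      exact Subtype.ext (Prod.ext h rfl)
    exact hsub G _ _ hinj hG
  · exact hsub.of_mulEquiv
      (QuotientGroup.quotientKerEquivOfSurjective _ Prod.snd_surjective) hH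

end GroupClass

theorem MonoidHom.prod_comp_retract_notMem_image {X K : Type} [Group X] [Group K]
    (σ : X →* K) {Y : Subgroup X} {ρ : X →* X} (hρid : ∀ y ∈ Y, ρ y = y) {x : X}
    (hx : σ x ≠ σ (ρ x)) : σ.prod (σ.comp ρ) x ∉ σ.prod (σ.comp ρ) '' (Y : Set X) := by
  rintro ⟨y, hy, heq⟩
  have h1 : σ y = σ x := congrArg Prod.fst heq
  have h2 : σ (ρ y) = σ (ρ x) := congrArg Prod.snd heq
  rw [hρid y hy, h1] at h2
  exact hx h2

/-- If `C` is a class of groups closed under taking subgroups and extensions,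
`X` is a residually-`C` group, and `Y` is a retract of `X`, then `Y` is
`C`-separable in `X`. -/
theorem retract_separable
    (C : ∀ (G : Type) [Group G], Prop)
    (hsub : ∀ (G : Type) [Group G] (K : Type) [Group K] (f : K →* G),
      Function.Injective f → C G → C K)
    (hext : ∀ (G : Type) [Group G] (N : Subgroup G) (hN : N.Normal),
      C N → @C (G ⧸ N) (@QuotientGroup.Quotient.group G _ N hN) → C G)
    (X : Type) [Group X]
    (hres : ∀ x : X, x ≠ 1 → ∃ (K : Type) (_ : Group K) (σ : X →* K),
      Function.Surjective σ ∧ C K ∧ σ x ≠ 1)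
    (Y : Subgroup X) (ρ : X →* X)
    (hρY : ∀ x : X, ρ x ∈ Y) (hρid : ∀ y ∈ Y, ρ y = y) :
    ∀ x : X, x ∉ Y → ∃ (K : Type) (_ : Group K) (σ : X →* K),
      Function.Surjective σ ∧ C K ∧ σ x ∉ σ '' (Y : Set X) := by
  intro x hx
  have hne : x * (ρ x)⁻¹ ≠ 1 := fun h => hx (mul_inv_eq_one.mp h ▸ hρY x)
  obtain ⟨K, _, σ, -, hK, hσ⟩ := hres _ hne
  rw [map_mul, map_inv, Ne, mul_inv_eq_one] at hσ
  set φ := σ.prod (σ.comp ρ)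
  have hφ : C φ.range := hsub _ _ φ.range.subtype φ.range.subtype_injective
    (GroupClass.ExtensionClosed.prod hext hsub hK hK)
  refine ⟨φ.range, inferInstance, φ.rangeRestrict, φ.rangeRestrict_surjective, hφ, ?_⟩
  rintro ⟨y, hy, heq⟩
  exact σ.prod_comp_retract_notMem_image hρid hσ ⟨y, hy, congrArg Subtype.val heq⟩
end

section
/- Let C be a class of groups closed under subgroups and finite direct products, G a group, Y, Z ≤ G subgroups, y ∈ G, and suppose H = Z ∪ yZ is a subgroup of G (i.e., H is the union of Z and the coset yZ). If for every g ∈ G \ H both g and y⁻¹g lie outside Z, and Z is C-separable in G, then H is C-separable in G. -/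
/-! Separate `g` from `Z` by `N₁` and `y⁻¹g` from `Z` by `N₂`. Then `N₁ ⊓ N₂` separates `g`
from `Z ∪ yZ`, and `G ⧸ (N₁ ⊓ N₂)` lies in `C` because it embeds in `G ⧸ N₁ × G ⧸ N₂`. -/

open Pointwise

namespace QuotientGroup

variable {G : Type*} [Group G] (N₁ N₂ : Subgroup G) [N₁.Normal] [N₂.Normal]

theorem ker_prod_mk' : ((mk' N₁).prod (mk' N₂)).ker = N₁ ⊓ N₂ := by
  rw [MonoidHom.ker_prod, ker_mk', ker_mk']

def infToProd : G ⧸ (N₁ ⊓ N₂) →* (G ⧸ N₁) × (G ⧸ N₂) :=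
  lift (N₁ ⊓ N₂) ((mk' N₁).prod (mk' N₂)) (ker_prod_mk' N₁ N₂).ge

theorem infToProd_injective : Function.Injective (infToProd N₁ N₂) :=
  (injective_lift_iff _ _ _).mpr (ker_prod_mk' N₁ N₂).symm

end QuotientGroup

theorem quotient_inf_of_closed (C : ∀ (G : Type) [Group G], Prop)
    (hsub : ∀ (G : Type) [Group G] (K : Type) [Group K] (f : K →* G),
      Function.Injective f → C G → C K)
    (hprod : ∀ (G : Type) [Group G] (K : Type) [Group K], C G → C K → C (G × K))
    {G : Type} [Group G] (N₁ N₂ : Subgroup G) [N₁.Normal] [N₂.Normal]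
    (h₁ : C (G ⧸ N₁)) (h₂ : C (G ⧸ N₂)) : C (G ⧸ (N₁ ⊓ N₂)) :=
  hsub _ _ _ (QuotientGroup.infToProd_injective N₁ N₂) (hprod _ _ h₁ h₂)

theorem Set.notMem_union_smul_mul_inf {G : Type*} [Group G] {Z : Set G} {N₁ N₂ : Subgroup G}
    {y g : G} (h₁ : g ∉ Z * (N₁ : Set G)) (h₂ : y⁻¹ * g ∉ Z * (N₂ : Set G)) :
    g ∉ (Z ∪ y • Z) * ((N₁ ⊓ N₂ : Subgroup G) : Set G) := by
  rintro ⟨h, hh, n, ⟨hn₁, hn₂⟩, rfl⟩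
  rcases hh with hz | ⟨z, hz, rfl⟩
  · exact h₁ ⟨h, hz, n, hn₁, rfl⟩
  · exact h₂ ⟨z, hz, n, hn₂, by simp [smul_eq_mul, mul_assoc]⟩

/-- Let `C` be a class of groups closed under subgroups and finite direct
products, `G` a group, `Z ≤ G` a subgroup, `y ∈ G`, and suppose `H` is a
subgroup of `G` whose underlying set is `Z ∪ yZ`. If for every `g ∈ G \ H`
both `g` and `y⁻¹g` lie outside `Z`, and `Z` is `C`-separable in `G`, then
`H` is `C`-separable in `G`. -/
theorem union_coset_separable
    (C : ∀ (G : Type) [Group G], Prop)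
    (hsub : ∀ (G : Type) [Group G] (K : Type) [Group K] (f : K →* G),
      Function.Injective f → C G → C K)
    (hprod : ∀ (G : Type) [Group G] (K : Type) [Group K], C G → C K → C (G × K))
    (G : Type) [Group G] (Z H : Subgroup G) (y : G)
    (hH : (H : Set G) = (Z : Set G) ∪ y • (Z : Set G))
    (hout : ∀ g : G, g ∉ H → g ∉ Z ∧ y⁻¹ * g ∉ Z)
    (hZsep : ∀ g : G, g ∉ Z → ∃ (N : Subgroup G) (hN : N.Normal),
      @C (G ⧸ N) (@QuotientGroup.Quotient.group G _ N hN) ∧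
      g ∉ (Z : Set G) * (N : Set G)) :
    ∀ g : G, g ∉ H → ∃ (N : Subgroup G) (hN : N.Normal),
      @C (G ⧸ N) (@QuotientGroup.Quotient.group G _ N hN) ∧
      g ∉ (H : Set G) * (N : Set G) := by
  intro g hg
  obtain ⟨hgZ, hygZ⟩ := hout g hg
  obtain ⟨N₁, _, hC₁, hsep₁⟩ := hZsep g hgZ
  obtain ⟨N₂, _, hC₂, hsep₂⟩ := hZsep (y⁻¹ * g) hygZ
  refine ⟨N₁ ⊓ N₂, inferInstance, quotient_inf_of_closed C hsub hprod N₁ N₂ hC₁ hC₂, ?_⟩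
  rw [hH]
  exact Set.notMem_union_smul_mul_inf hsep₁ hsep₂
end
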